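/- Let G be a finite graph with maximum average degree at most d - ε (d a positive integer, 0 < ε ≤ d²). Then there is a partition V(G) = I₁ ∪ I₂ ∪ … ∪ I_m with m = O(log n) (n = |V(G)|), where each I_j is an independent set in the graph G - (I₁ ∪ … ∪ I_{j-1}) consisting of vertices of degree at most d - 1 in that graph, and |I_j| ≥ (ε/d²)·|V(G - (I₁ ∪ … ∪ I_{j-1}))|. -/

import Mathlib

/-!
A graph of maximum average degree at most `d - ε` has, in every vertex set `R`, at least
`(ε / d) |R|` vertices of degree `< d` in `G[R]`: each of the others contributes `d` to a degree
sum of at most `(d - ε) |R|`. Among these low-degree vertices a greedy choice (take a vertex, drop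
its at most `d - 1` neighbours) gives an independent set containing a `1 / d` fraction of them.
Peeling such a set off repeatedly shrinks the remaining vertex set by a factor `1 - ε / d²` each
time, so after `k > log n · d² / ε` rounds nothing is left.
-/

open Finset

namespace SimpleGraph

variable {V : Type*} [DecidableEq V] (G : SimpleGraph V) [Fintype V] [DecidableRel G.Adj]

def MaxAvgDegreeLE (D : ℝ) : Prop :=
  ∀ H : G.Subgraph, H.verts.Nonempty → 2 * (H.edgeSet.ncard : ℝ) ≤ D * H.verts.ncard

theorem exists_isIndepSet_subset_card_le_mul {d : ℕ} (S : Finset V)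
    (hS : ∀ v ∈ S, #(G.neighborFinset v ∩ S) < d) :
    ∃ T ⊆ S, G.IsIndepSet (T : Set V) ∧ #S ≤ d * #T := by
  induction S using Finset.strongInduction with
  | H S ih =>
  obtain rfl | ⟨v, hv⟩ := S.eq_empty_or_nonempty
  · exact ⟨∅, by simp⟩
  set S' := S \ insert v (G.neighborFinset v)
  have hS'S : S' ⊂ S := (ssubset_iff_of_subset sdiff_subset).2 ⟨v, hv, by simp⟩
  have hS' : ∀ u ∈ S', #(G.neighborFinset u ∩ S') < d := fun u hu =>
    (card_le_card (inter_subset_inter_left sdiff_subset)).trans_lt (hS u (sdiff_subset hu))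
  obtain ⟨T, hTS', hT, hcard⟩ := ih S' hS'S hS'
  have hvT : ∀ u ∈ T, u ≠ v ∧ ¬ G.Adj v u := fun u hu => by
    have := hTS' hu
    simp_all [S']
  refine ⟨insert v T, insert_subset hv (hTS'.trans sdiff_subset), ?_, ?_⟩
  · rw [coe_insert, isIndepSet_iff, Set.pairwise_insert]
    exact ⟨hT, fun u hu _ => ⟨(hvT u hu).2, fun h => (hvT u hu).2 h.symm⟩⟩
  · have hdrop : #(S ∩ insert v (G.neighborFinset v)) ≤ d := by
      rw [inter_insert_of_mem hv, inter_comm]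
      exact (card_insert_le _ _).trans (hS v hv)
    rw [card_insert_of_notMem fun h => (hvT v h).1 rfl,
      ← card_sdiff_add_card_inter S (insert v (G.neighborFinset v))]
    linarith

theorem two_mul_ncard_edgeSet_induce (R : Finset V) :
    2 * ((⊤ : G.Subgraph).induce (R : Set V)).edgeSet.ncard =
      ∑ v ∈ R, #(G.neighborFinset v ∩ R) := by
  classical
  set H := (⊤ : G.Subgraph).induce (R : Set V)
  have hnbr : ∀ v, H.spanningCoe.neighborFinset v =
      if v ∈ R then G.neighborFinset v ∩ R else ∅ := by
    intro v
    ext w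
    split_ifs <;> simp_all [H, and_comm]
  rw [← Subgraph.edgeSet_spanningCoe, Set.ncard_eq_toFinset_card', ← edgeFinset,
    ← sum_degrees_eq_twice_card_edges, ← sum_subset (subset_univ R)]
  · refine sum_congr rfl fun v hv => ?_
    rw [← card_neighborFinset_eq_degree, hnbr, if_pos hv]
  · intro v _ hv
    rw [← card_neighborFinset_eq_degree, hnbr, if_neg hv, card_empty]

variable {G}

theorem mul_card_le_mul_card_filter_neighborFinset_inter_lt {d : ℕ} {ε : ℝ}
    (hmad : G.MaxAvgDegreeLE (d - ε)) (R : Finset V) :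
    ε * #R ≤ d * #{v ∈ R | #(G.neighborFinset v ∩ R) < d} := by
  obtain rfl | hR := R.eq_empty_or_nonempty
  · simp
  have hedges := hmad ((⊤ : G.Subgraph).induce (R : Set V)) (by simpa using hR)
  rw [Subgraph.induce_verts, Set.ncard_coe_finset, ← Nat.cast_two, ← Nat.cast_mul,
    two_mul_ncard_edgeSet_induce] at hedges
  have hhigh : d * #{v ∈ R | ¬ #(G.neighborFinset v ∩ R) < d} ≤
      ∑ v ∈ R, #(G.neighborFinset v ∩ R) := by
    rw [mul_comm, ← smul_eq_mul]
    refine (card_nsmul_le_sum _ _ _ fun v hv => ?_).trans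
      (sum_le_sum_of_subset (filter_subset _ R))
    exact not_lt.1 (mem_filter.1 hv).2
  rw [← card_filter_add_card_filter_not (s := R) fun v => #(G.neighborFinset v ∩ R) < d]
    at hedges ⊢
  generalize ∑ v ∈ R, #(G.neighborFinset v ∩ R) = D at hedges hhigh
  push_cast at hedges ⊢
  have : (d : ℝ) * #{v ∈ R | ¬ #(G.neighborFinset v ∩ R) < d} ≤ D := by
    exact_mod_cast hhigh
  linarith

theorem exists_isIndepSet_forall_lt_and_mul_card_le {d : ℕ} {ε : ℝ}
    (hmad : G.MaxAvgDegreeLE (d - ε)) (R : Finset V) :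
    ∃ T ⊆ R, G.IsIndepSet (T : Set V) ∧ (∀ v ∈ T, #(G.neighborFinset v ∩ R) < d) ∧
      ε * #R ≤ d ^ 2 * #T := by
  set S := {v ∈ R | #(G.neighborFinset v ∩ R) < d}
  have hSR : S ⊆ R := filter_subset _ R
  have hS : ∀ v ∈ S, #(G.neighborFinset v ∩ S) < d := fun v hv =>
    (card_le_card (inter_subset_inter_left hSR)).trans_lt (mem_filter.1 hv).2
  obtain ⟨T, hTS, hT, hcard⟩ := G.exists_isIndepSet_subset_card_le_mul S hS
  refine ⟨T, hTS.trans hSR, hT, fun v hv => (mem_filter.1 (hTS hv)).2, ?_⟩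
  calc ε * #R ≤ d * #S := mul_card_le_mul_card_filter_neighborFinset_inter_lt hmad R
    _ ≤ d * (d * #T) := by gcongr; exact_mod_cast hcard
    _ = d ^ 2 * #T := by ring

end SimpleGraph

section Peeling

variable {V : Type*} [Fintype V] [DecidableEq V] (f : Finset V → Finset V)

def remainingAfter (k : ℕ) : Finset V := (fun R => R \ f R)^[k] univ

theorem remainingAfter_succ (k : ℕ) :
    remainingAfter f (k + 1) = remainingAfter f k \ f (remainingAfter f k) :=
  Function.iterate_succ_apply' _ _ _

theorem sdiff_biUnion_range_eq_remainingAfter (k : ℕ) :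
    univ \ (range k).biUnion (fun i => f (remainingAfter f i)) = remainingAfter f k := by
  induction k with
  | zero => simp [remainingAfter]
  | succ k ih => rw [range_add_one, biUnion_insert, union_comm, ← sup_eq_union,
      ← sdiff_sdiff_left, ih, remainingAfter_succ]

variable {f}

theorem disjoint_apply_remainingAfter_of_lt (hf : ∀ R, f R ⊆ R) {i j : ℕ} (hij : i < j) :
    Disjoint (f (remainingAfter f i)) (f (remainingAfter f j)) := by
  have hprefix : f (remainingAfter f i) ⊆ (range j).biUnion fun l => f (remainingAfter f l) :=
    subset_biUnion_of_mem (fun l => f (remainingAfter f l)) (mem_range.2 hij)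
  have hrest := (hf (remainingAfter f j)).trans (sdiff_biUnion_range_eq_remainingAfter f j).ge
  exact (disjoint_sdiff.mono_left hprefix).mono_right hrest

theorem card_remainingAfter_le (hf : ∀ R, f R ⊆ R) {δ : ℝ} (hδ1 : δ ≤ 1)
    (hsize : ∀ R, δ * #R ≤ #(f R)) (k : ℕ) :
    (#(remainingAfter f k) : ℝ) ≤ (1 - δ) ^ k * Fintype.card V := by
  induction k with
  | zero => simp [remainingAfter]
  | succ k ih =>
    set R := remainingAfter f k
    rw [remainingAfter_succ, card_sdiff_of_subset (hf R), Nat.cast_sub (card_le_card (hf R))]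
    calc (#R : ℝ) - #(f R) ≤ (1 - δ) * #R := by linarith [hsize R]
      _ ≤ (1 - δ) * ((1 - δ) ^ k * Fintype.card V) := by gcongr
      _ = (1 - δ) ^ (k + 1) * Fintype.card V := by ring

theorem remainingAfter_eq_empty_of_log_card_lt (hf : ∀ R, f R ⊆ R) {δ : ℝ} (hδ1 : δ ≤ 1)
    (hsize : ∀ R, δ * #R ≤ #(f R)) {k : ℕ} (hk : Real.log (Fintype.card V) < δ * k) :
    remainingAfter f k = ∅ := by
  rcases (Fintype.card V).eq_zero_or_pos with hV | hV
  · have := Fintype.card_eq_zero_iff.1 hV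
    exact eq_empty_of_isEmpty _
  rw [← card_eq_zero, ← Nat.lt_one_iff, ← Nat.cast_lt (α := ℝ), Nat.cast_one]
  calc (#(remainingAfter f k) : ℝ) ≤ (1 - δ) ^ k * Fintype.card V :=
        card_remainingAfter_le hf hδ1 hsize k
    _ ≤ Real.exp (-δ) ^ k * Fintype.card V := by
      gcongr
      linarith [Real.add_one_le_exp (-δ)]
    _ = Fintype.card V / Real.exp (δ * k) := by
      rw [← Real.exp_nat_mul, mul_neg, Real.exp_neg, mul_comm δ]
      ring
    _ < 1 := by
      rwa [div_lt_one (Real.exp_pos _), ← Real.log_lt_iff_lt_exp (by exact_mod_cast hV)]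

theorem exists_remainingAfter_eq_empty (hf : ∀ R, f R ⊆ R) {δ : ℝ} (hδ : 0 < δ)
    (hδ1 : δ ≤ 1) (hsize : ∀ R, δ * #R ≤ #(f R)) :
    ∃ m : ℕ, (m : ℝ) ≤ 1 / δ * (Real.log (Fintype.card V) + 1) ∧
      remainingAfter f m = ∅ := by
  set x := Real.log (Fintype.card V) / δ
  have hx : 0 ≤ x := div_nonneg (Real.log_natCast_nonneg _) hδ.le
  refine ⟨⌊x⌋₊ + 1, ?_, remainingAfter_eq_empty_of_log_card_lt hf hδ1 hsize ?_⟩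
  · have hinv : 1 ≤ 1 / δ := by rw [le_div_iff₀ hδ]; linarith
    push_cast
    calc (⌊x⌋₊ : ℝ) + 1 ≤ x + 1 := by gcongr; exact Nat.floor_le hx
      _ ≤ 1 / δ * (Real.log (Fintype.card V) + 1) := by
        rw [mul_add, mul_one, one_div_mul_eq_div]
        gcongr
  · rw [← div_lt_iff₀' hδ]
    push_cast
    exact Nat.lt_floor_add_one x

end Peeling

theorem Finset.biUnion_filter_lt_fin {α : Type*} [DecidableEq α] {m : ℕ} (g : ℕ → Finset α)
    (j : Fin m) :
    (univ.filter fun i : Fin m => i < j).biUnion (fun i => g i) = (range j).biUnion g := by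
  ext x
  simp only [mem_biUnion, mem_filter, mem_univ, true_and, Fin.exists_iff, mem_range]
  grind

theorem Finset.univ_biUnion_fin {α : Type*} [DecidableEq α] {m : ℕ} (g : ℕ → Finset α) :
    univ.biUnion (fun i : Fin m => g i) = (range m).biUnion g := by
  ext x
  simp [Fin.exists_iff]

theorem stmt10_general (d : ℕ) (ε : ℝ) (hε : 0 < ε) (hεd : ε ≤ (d : ℝ) ^ 2) :
    ∃ C : ℝ, 0 < C ∧
      ∀ (V : Type) (_ : Fintype V) (_ : DecidableEq V) (G : SimpleGraph V)
        (_ : DecidableRel G.Adj),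
        (∀ H : G.Subgraph, H.verts.Nonempty →
          2 * (H.edgeSet.ncard : ℝ) ≤ ((d : ℝ) - ε) * H.verts.ncard) →
        ∃ (m : ℕ) (I : Fin m → Finset V),
          (∀ i j : Fin m, i ≠ j → Disjoint (I i) (I j)) ∧
          (Finset.univ.biUnion I = Finset.univ) ∧
          (m : ℝ) ≤ C * (Real.log (Fintype.card V) + 1) ∧
          ∀ j : Fin m,
            -- `R` is the vertex set of the graph `G - (I₁ ∪ … ∪ I_{j-1})`
            let R : Finset V :=
              Finset.univ \ ((Finset.univ.filter (fun i : Fin m => i < j)).biUnion I)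
            I j ⊆ R ∧
            (∀ u ∈ I j, ∀ v ∈ I j, ¬ G.Adj u v) ∧
            (∀ v ∈ I j, (G.neighborFinset v ∩ R).card ≤ d - 1) ∧
            ε / (d : ℝ) ^ 2 * (R.card : ℝ) ≤ ((I j).card : ℝ) := by
  have hd : (0 : ℝ) < (d : ℝ) ^ 2 := hε.trans_le hεd
  set δ := ε / (d : ℝ) ^ 2
  have hδ : 0 < δ := div_pos hε hd
  have hδ1 : δ ≤ 1 := (div_le_one hd).2 hεd
  refine ⟨1 / δ, one_div_pos.2 hδ, fun V _ _ G _ hmad => ?_⟩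
  choose f hfR hfindep hfdeg hfsize using
    SimpleGraph.exists_isIndepSet_forall_lt_and_mul_card_le hmad
  have hsize : ∀ R, δ * #R ≤ #(f R) := fun R => by
    rw [div_mul_eq_mul_div, div_le_iff₀ hd, mul_comm _ (d ^ 2 : ℝ)]
    exact hfsize R
  obtain ⟨m, hm, hempty⟩ := exists_remainingAfter_eq_empty hfR hδ hδ1 hsize
  refine ⟨m, fun j => f (remainingAfter f j), fun i j hij => ?_, ?_, hm, fun j => ?_⟩
  · rcases lt_or_gt_of_ne hij with h | h
    exacts [disjoint_apply_remainingAfter_of_lt hfR h,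
      (disjoint_apply_remainingAfter_of_lt hfR h).symm]
  · rw [univ_biUnion_fin fun i => f (remainingAfter f i), ← univ_subset_iff,
      ← sdiff_eq_empty_iff_subset, sdiff_biUnion_range_eq_remainingAfter, hempty]
  · dsimp only
    rw [biUnion_filter_lt_fin fun i => f (remainingAfter f i),
      sdiff_biUnion_range_eq_remainingAfter]
    exact ⟨hfR _, fun u hu v hv huv => hfindep _ hu hv (G.ne_of_adj huv) huv,
      fun v hv => Nat.le_sub_one_of_lt (hfdeg _ v hv), hsize _⟩

/-- Let `d` be a positive integer and `0 < ε ≤ d²`. There is a constant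
`C = C(d, ε)` such that every finite graph `G` with maximum average degree at most
`d - ε` admits a partition `V(G) = I₁ ∪ … ∪ I_m` with `m = O(log n)`, where each `I_j` is
an independent set of the graph `G - (I₁ ∪ … ∪ I_{j-1})` consisting of vertices of degree
at most `d - 1` in that graph, with `|I_j| ≥ (ε/d²)·|V(G - (I₁ ∪ … ∪ I_{j-1}))|`. -/
theorem stmt10 (d : ℕ) (hd : 0 < d) (ε : ℝ) (hε : 0 < ε) (hεd : ε ≤ (d : ℝ) ^ 2) :
    ∃ C : ℝ, 0 < C ∧
      ∀ (V : Type) (_ : Fintype V) (_ : DecidableEq V) (G : SimpleGraph V)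
        (_ : DecidableRel G.Adj),
        (∀ H : G.Subgraph, H.verts.Nonempty →
          2 * (H.edgeSet.ncard : ℝ) ≤ ((d : ℝ) - ε) * H.verts.ncard) →
        ∃ (m : ℕ) (I : Fin m → Finset V),
          (∀ i j : Fin m, i ≠ j → Disjoint (I i) (I j)) ∧
          (Finset.univ.biUnion I = Finset.univ) ∧
          (m : ℝ) ≤ C * (Real.log (Fintype.card V) + 1) ∧
          ∀ j : Fin m,
            -- `R` is the vertex set of the graph `G - (I₁ ∪ … ∪ I_{j-1})`
            let R : Finset V :=
              Finset.univ \ ((Finset.univ.filter (fun i : Fin m => i < j)).biUnion I)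
            I j ⊆ R ∧
            (∀ u ∈ I j, ∀ v ∈ I j, ¬ G.Adj u v) ∧
            (∀ v ∈ I j, (G.neighborFinset v ∩ R).card ≤ d - 1) ∧
            ε / (d : ℝ) ^ 2 * (R.card : ℝ) ≤ ((I j).card : ℝ) :=
  stmt10_general d ε hε hεd
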